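/- Let X = {0,1}^ℕ with the product topology and for i ∈ {0,1} define f_i : X → X by f_i(ζ) = iζ_1ζ_2⋯ if ζ_1 = i, and f_i(ζ) = ζ_2ζ_3⋯ if ζ_1 ≠ i. Then the IFS (X, {f_0, f_1}, full shift) is exact: for every nonempty open set U ⊆ X there exists a word u over {0,1} such that for every word u′ over {0,1}, f_{uu′}(U) = X. -/
import Mathlib


/-- `applyWord F u x` is `f_u(x) = f_{u_n} ∘ ⋯ ∘ f_{u_1} (x)` for the word `u = u_1 ⋯ u_n`. -/
def applyWord {X : Type*} {k : ℕ} (F : Fin k → X → X) : List (Fin k) → X → X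
  | [], x => x
  | a :: u, x => applyWord F u (F a x)

/-- Prepend the symbol `a` to the sequence `ξ`. -/
def prepend (a : Fin 2) (ξ : ℕ → Fin 2) : ℕ → Fin 2
  | 0 => a
  | n + 1 => ξ n

/-- `f_i(ζ) = iζ` if `ζ_1 = i`, and `f_i(ζ) = ζ_2ζ_3⋯` otherwise. -/
def pushPop (i : Fin 2) (ζ : ℕ → Fin 2) : ℕ → Fin 2 :=
  if ζ 0 = i then prepend i ζ else fun n => ζ (n + 1)

/-- The other symbol. -/
def flipSym (i : Fin 2) : Fin 2 := if i = 0 then 1 else 0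

lemma flipSym_ne (i : Fin 2) : flipSym i ≠ i := by fin_cases i <;> decide

lemma applyWord_append {X : Type*} {k : ℕ} (F : Fin k → X → X) (u u' : List (Fin k))
    (x : X) : applyWord F (u ++ u') x = applyWord F u' (applyWord F u x) := by
  induction u generalizing x with
  | nil => rfl
  | cons a u ih => simp [applyWord, ih]

lemma pushPop_surj (i : Fin 2) : Function.Surjective (pushPop i) := by
  intro η
  refine ⟨prepend (flipSym i) η, ?_⟩
  have h0 : prepend (flipSym i) η 0 = flipSym i := rfl
  unfold pushPop
  rw [h0, if_neg (flipSym_ne i)]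
  funext n
  rfl

lemma applyWord_surj (u : List (Fin 2)) : Function.Surjective (applyWord pushPop u) := by
  induction u with
  | nil => exact fun x => ⟨x, rfl⟩
  | cons a u ih =>
    intro ξ
    obtain ⟨η, hη⟩ := ih ξ
    obtain ⟨ζ, hζ⟩ := pushPop_surj a η
    exact ⟨ζ, by simp [applyWord, hζ, hη]⟩

/-- The word of complements of the first `n` letters of `x`. -/
def compWord : ℕ → (ℕ → Fin 2) → List (Fin 2)
  | 0, _ => []
  | n + 1, x => flipSym (x 0) :: compWord n (fun m => x (m + 1))

lemma compWord_apply : ∀ n (x y : ℕ → Fin 2), (∀ j < n, y j = x j) →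
    applyWord pushPop (compWord n x) y = fun m => y (m + n) := by
  intro n
  induction n with
  | zero => intro x y _; funext m; simp [compWord, applyWord]
  | succ n ih =>
    intro x y h
    have hy0 : y 0 = x 0 := h 0 (Nat.succ_pos n)
    have hstep : pushPop (flipSym (x 0)) y = fun m => y (m + 1) := by
      unfold pushPop
      rw [if_neg (by rw [hy0]; exact fun e => flipSym_ne (x 0) e.symm)]
    have := ih (fun m => x (m + 1)) (fun m => y (m + 1))
      (fun j hj => h (j + 1) (by omega))
    simp only [compWord, applyWord, hstep, this]
    funext m
    rw [Nat.add_assoc]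

/-- The IFS `({0,1}^ℕ, {f_0, f_1}, full shift)` with the maps `pushPop` is exact. -/
theorem stmt10 :
    ∀ U : Set (ℕ → Fin 2), IsOpen U → U.Nonempty →
      ∃ u : List (Fin 2), ∀ u' : List (Fin 2),
        (applyWord pushPop (u ++ u')) '' U = Set.univ := by
  intro U hU ⟨x, hx⟩
  rw [isOpen_pi_iff] at hU
  obtain ⟨I, t, hIt, hsub⟩ := hU x hx
  set n : ℕ := I.sup id + 1 with hn
  have hcyl : ∀ y : ℕ → Fin 2, (∀ j < n, y j = x j) → y ∈ U := by
    intro y hy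
    apply hsub
    intro i hi
    have : i < n := Nat.lt_succ_of_le (Finset.le_sup (f := id) hi)
    rw [hy i this]
    exact (hIt i hi).2
  refine ⟨compWord n x, fun u' => ?_⟩
  ext ξ
  simp only [Set.mem_image, Set.mem_univ, iff_true]
  obtain ⟨η, hη⟩ := applyWord_surj u' ξ
  set y : ℕ → Fin 2 := fun m => if m < n then x m else η (m - n) with hy
  have hyx : ∀ j < n, y j = x j := fun j hj => by simp [hy, hj]
  refine ⟨y, hcyl y hyx, ?_⟩
  rw [applyWord_append, compWord_apply n x y hyx]
  have : (fun m => y (m + n)) = η := by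
    funext m
    simp only [hy]
    rw [if_neg (by omega)]
    congr 1
    omega
  rw [this, hη]
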